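/- arXiv:2401.06611 — 5 statements merged into one kernel-verified Lean document; each statement's English description precedes it below -/
import Mathlib

section
/- In the two-period dynamic binary response model with observed initial condition y₀, the set U*(y,z,y₀;θ) = {u ∈ ℝ² : ∃ c ∈ ℝ such that for t ∈ {1,2}, (yₜ = 1 → zₜβ + yₜ₋₁γ + c + uₜ ≥ 0) and (yₜ = 0 → zₜβ + yₜ₋₁γ + c + uₜ ≤ 0)} (with y₀ the initial value and y₁ entering the t=2 inequality) satisfies: U* = ℝ² when y = (0,0) or y = (1,1); U* = {u : u₂ - u₁ ≥ -(z₂-z₁)β + y₀γ} when y = (0,1); and U* = {u : u₂ - u₁ ≤ -(z₂-z₁)β + (y₀-1)γ} when y = (1,0). -/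
open scoped BigOperators

def dot {k : ℕ} (x y : Fin k → ℝ) : ℝ := ∑ i, x i * y i

def b2r (b : Bool) : ℝ := if b then 1 else 0

/-- `U*` sets in the two period dynamic binary response panel model with
observed initial condition `y0`. -/
def Ustar2 {k : ℕ} (β : Fin k → ℝ) (γ : ℝ) (z1 z2 : Fin k → ℝ) (y0 y1 y2 : Bool) :
    Set (Fin 2 → ℝ) :=
  {u | ∃ c : ℝ,
    ((y1 = true → 0 ≤ dot z1 β + b2r y0 * γ + c + u 0) ∧
     (y1 = false → dot z1 β + b2r y0 * γ + c + u 0 ≤ 0)) ∧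
    ((y2 = true → 0 ≤ dot z2 β + b2r y1 * γ + c + u 1) ∧
     (y2 = false → dot z2 β + b2r y1 * γ + c + u 1 ≤ 0))}

theorem two_period_dynamic_binary_Ustar {k : ℕ} (β : Fin k → ℝ) (γ : ℝ)
    (z1 z2 : Fin k → ℝ) (y0 : Bool) :
    Ustar2 β γ z1 z2 y0 false false = Set.univ ∧
    Ustar2 β γ z1 z2 y0 true true = Set.univ ∧
    Ustar2 β γ z1 z2 y0 false true =
      {u | u 1 - u 0 ≥ -(dot z2 β - dot z1 β) + b2r y0 * γ} ∧
    Ustar2 β γ z1 z2 y0 true false =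
      {u | u 1 - u 0 ≤ -(dot z2 β - dot z1 β) + (b2r y0 - 1) * γ} := by
  have hb0 : b2r false = 0 := rfl
  have hb1 : b2r true = 1 := rfl
  refine ⟨?_, ?_, ?_, ?_⟩
  · ext u
    simp only [Ustar2, Set.mem_setOf_eq, Set.mem_univ, iff_true]
    set A := dot z1 β + b2r y0 * γ + u 0 with hA
    set B := dot z2 β + b2r false * γ + u 1 with hB
    refine ⟨min (-A) (-B), ?_⟩
    have h1 : min (-A) (-B) ≤ -A := min_le_left _ _
    have h2 : min (-A) (-B) ≤ -B := min_le_right _ _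
    exact ⟨⟨fun h => by simp at h, fun _ => by linarith⟩,
           ⟨fun h => by simp at h, fun _ => by linarith⟩⟩
  · ext u
    simp only [Ustar2, Set.mem_setOf_eq, Set.mem_univ, iff_true]
    set A := dot z1 β + b2r y0 * γ + u 0 with hA
    set B := dot z2 β + b2r true * γ + u 1 with hB
    refine ⟨max (-A) (-B), ?_⟩
    have h1 : -A ≤ max (-A) (-B) := le_max_left _ _
    have h2 : -B ≤ max (-A) (-B) := le_max_right _ _
    exact ⟨⟨fun _ => by linarith, fun h => by simp at h⟩,
           ⟨fun _ => by linarith, fun h => by simp at h⟩⟩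
  · ext u
    simp only [Ustar2, Set.mem_setOf_eq, ge_iff_le]
    constructor
    · rintro ⟨c, ⟨-, h1⟩, ⟨h2, -⟩⟩
      have h1 := h1 trivial
      have h2 := h2 trivial
      rw [hb0] at h2
      linarith
    · intro h
      refine ⟨-(dot z2 β + u 1), ⟨fun hc => by simp at hc, fun _ => by linarith⟩,
             ⟨fun _ => by rw [hb0]; linarith, fun hc => by simp at hc⟩⟩
  · ext u
    simp only [Ustar2, Set.mem_setOf_eq]
    constructor
    · rintro ⟨c, ⟨h1, -⟩, ⟨-, h2⟩⟩
      have h1 := h1 trivial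
      have h2 := h2 trivial
      rw [hb1] at h2
      linarith
    · intro h
      refine ⟨-(dot z1 β + b2r y0 * γ + u 0), ⟨fun _ => by linarith, fun hc => by simp at hc⟩,
             ⟨fun hc => by simp at hc, fun _ => by rw [hb1]; linarith⟩⟩
end

section
/- In the general ordered response panel model, the set U*(Y,Z) = {u ∈ ℝᵀ : ∃ v ∈ ℝ such that for all t ∈ [T], c_{Y_t} ≤ Z̃_t β̃ + v + u_t ≤ c_{Y_t + 1}} equals {u ∈ ℝᵀ : ∀ s,t ∈ [T], u_t - u_s ≤ c_{Y_t + 1} - c_{Y_s} - (Z̃_t - Z̃_s)β̃}. -/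
open scoped BigOperators

/-! The conditions on `v` say that `v` lies in the interval
`[c_{Y_t} - Z̃_t β̃ - u_t, c_{Y_t+1} - Z̃_t β̃ - u_t]` for every `t`. Finitely many closed intervals of
extended reals share a real point as soon as every lower endpoint lies below every upper endpoint,
the lower endpoints are `< ⊤` and the upper ones `> ⊥`: take `v` between the largest lower and the
smallest upper endpoint. The pairwise inequalities of the second set are exactly
"lower endpoint at `s` ≤ upper endpoint at `t`", and their case `s = t` already forces the two
finiteness conditions, because `x - ⊤ = ⊥ - y = ⊥` in `EReal`. -/

open Finset

namespace EReal

lemma exists_coe_mem_Icc {a b : EReal} (hab : a ≤ b) (ha : a ≠ ⊤) (hb : b ≠ ⊥) :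
    ∃ v : ℝ, (v : EReal) ∈ Set.Icc a b := by
  rcases hab.lt_or_eq with hlt | rfl
  · obtain ⟨v, hav, hvb⟩ := exists_between_coe_real hlt
    exact ⟨v, hav.le, hvb.le⟩
  · exact ⟨a.toReal, (coe_toReal ha hb).ge, (coe_toReal ha hb).le⟩

lemma exists_coe_forall_mem_Icc {ι : Type*} [Fintype ι] {A B : ι → EReal}
    (hAB : ∀ i j, A i ≤ B j) (hA : ∀ i, A i ≠ ⊤) (hB : ∀ i, B i ≠ ⊥) :
    ∃ v : ℝ, ∀ i, (v : EReal) ∈ Set.Icc (A i) (B i) := by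
  obtain ⟨v, hAv, hvB⟩ := exists_coe_mem_Icc (a := univ.sup A) (b := univ.inf B)
    (Finset.sup_le fun i _ => Finset.le_inf fun j _ => hAB i j)
    ((Finset.sup_lt_iff bot_lt_top).2 fun i _ => (hA i).lt_top).ne
    ((Finset.lt_inf_iff bot_lt_top).2 fun i _ => (hB i).bot_lt).ne'
  exact ⟨v, fun i => ⟨(le_sup (mem_univ i)).trans hAv, hvB.trans (inf_le (mem_univ i))⟩⟩

lemma sub_coe_le_coe_iff (a : EReal) (x y : ℝ) :
    a - x ≤ y ↔ a ≤ ((y + x : ℝ) : EReal) := by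
  rw [sub_le_iff_le_add (.inl (coe_ne_bot x)) (.inl (coe_ne_top x)), coe_add]

lemma sub_coe_ne_top {a : EReal} (ha : a ≠ ⊤) (x : ℝ) : a - x ≠ ⊤ :=
  add_ne_top ha (coe_ne_top (-x))

lemma sub_coe_ne_bot {a : EReal} (ha : a ≠ ⊥) (x : ℝ) : a - x ≠ ⊥ :=
  add_ne_bot_iff.2 ⟨ha, coe_ne_bot (-x)⟩

lemma coe_le_sub_coe_iff (x y : ℝ) (b : EReal) :
    (x : EReal) ≤ b - y ↔ ((x + y : ℝ) : EReal) ≤ b := by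
  rw [le_sub_iff_add_le (.inl (coe_ne_bot y)) (.inl (coe_ne_top y)), coe_add]

lemma sub_coe_le_sub_coe_of_coe_sub_le {a b : EReal} {x y : ℝ}
    (h : ((y - x : ℝ) : EReal) ≤ b - a) (ha : a ≠ ⊤) (hb : b ≠ ⊥) : a - x ≤ b - y := by
  rcases eq_or_ne a ⊥ with rfl | ha'
  · rw [bot_sub]; exact bot_le
  rcases eq_or_ne b ⊤ with rfl | hb'
  · rw [top_sub_coe]; exact le_top
  lift a to ℝ using ⟨ha, ha'⟩
  lift b to ℝ using ⟨hb', hb⟩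
  norm_cast at h ⊢
  linarith

end EReal

theorem exists_forall_le_coe_add_le_iff {ι : Type*} [Fintype ι] (a b : ι → EReal) (r : ι → ℝ) :
    (∃ v : ℝ, ∀ i, a i ≤ ((r i + v : ℝ) : EReal) ∧ ((r i + v : ℝ) : EReal) ≤ b i) ↔
      ∀ i j, ((r j - r i : ℝ) : EReal) ≤ b j - a i := by
  constructor
  · rintro ⟨v, hv⟩ i j
    calc ((r j - r i : ℝ) : EReal) = ((r j + v : ℝ) : EReal) - ((r i + v : ℝ) : EReal) := by
          rw [← EReal.coe_sub, add_sub_add_right_eq_sub]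
      _ ≤ b j - a i := EReal.sub_le_sub (hv j).2 (hv i).1
  · intro h
    -- `b i - a i = ⊥` whenever `a i = ⊤` or `b i = ⊥`, which the case `j = i` excludes.
    have ha : ∀ i, a i ≠ ⊤ := fun i hi => by simpa [hi] using h i i
    have hb : ∀ i, b i ≠ ⊥ := fun i hi => by simpa [hi] using h i i
    obtain ⟨v, hv⟩ := EReal.exists_coe_forall_mem_Icc (A := fun i => a i - r i)
      (B := fun i => b i - r i)
      (fun i j => EReal.sub_coe_le_sub_coe_of_coe_sub_le (h i j) (ha i) (hb j))
      (fun i => EReal.sub_coe_ne_top (ha i) _) (fun i => EReal.sub_coe_ne_bot (hb i) _)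
    refine ⟨v, fun i => ⟨?_, ?_⟩⟩
    · rw [add_comm, ← EReal.sub_coe_le_coe_iff]
      exact (hv i).1
    · rw [add_comm, ← EReal.coe_le_sub_coe_iff]
      exact (hv i).2

theorem general_ordered_response_Ustar_general {T k J : ℕ}
    (c : Fin (J + 2) → EReal)
    (Y : Fin T → Fin (J + 1)) (Zt : Fin T → Fin k → ℝ) (β : Fin k → ℝ) :
    {u : Fin T → ℝ | ∃ v : ℝ, ∀ t : Fin T,
        c (Y t).castSucc ≤ ((dot (Zt t) β + v + u t : ℝ) : EReal) ∧
        ((dot (Zt t) β + v + u t : ℝ) : EReal) ≤ c (Y t).succ} =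
    {u : Fin T → ℝ | ∀ s t : Fin T,
        ((u t - u s : ℝ) : EReal) ≤
          c (Y t).succ - c (Y s).castSucc - ((dot (Zt t) β - dot (Zt s) β : ℝ) : EReal)} := by
  ext u
  refine (exists_congr fun v => forall_congr' fun t => ?_).trans
    ((exists_forall_le_coe_add_le_iff (fun t => c (Y t).castSucc) (fun t => c (Y t).succ)
      (fun t => dot (Zt t) β + u t)).trans (forall₂_congr fun s t => ?_))
  · rw [add_right_comm]
  · rw [EReal.coe_le_sub_coe_iff]
    ring_nf

theorem general_ordered_response_Ustar {T k J : ℕ} (hT : 1 ≤ T)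
    (c : Fin (J + 2) → EReal) (hc : StrictMono c)
    (hc0 : c 0 = ⊥) (hcJ1 : c (Fin.last (J + 1)) = ⊤)
    (Y : Fin T → Fin (J + 1)) (Zt : Fin T → Fin k → ℝ) (β : Fin k → ℝ) :
    {u : Fin T → ℝ | ∃ v : ℝ, ∀ t : Fin T,
        c (Y t).castSucc ≤ ((dot (Zt t) β + v + u t : ℝ) : EReal) ∧
        ((dot (Zt t) β + v + u t : ℝ) : EReal) ≤ c (Y t).succ} =
    {u : Fin T → ℝ | ∀ s t : Fin T,
        ((u t - u s : ℝ) : EReal) ≤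
          c (Y t).succ - c (Y s).castSucc - ((dot (Zt t) β - dot (Zt s) β : ℝ) : EReal)} :=
  general_ordered_response_Ustar_general c Y Zt β
end

section
/- In the two-period simultaneous binary response panel model with α₁ ≥ 0 and α₂ ≥ 0, among the eight distinct non-trivial U* sets, the sets U*((0,1,0,1),z) = {u : Δu₁ ≥ -Δzβ₁ - α₁ ∧ Δu₂ ≥ -Δzβ₂ - α₂} and U*((1,0,1,0),z) = {u : Δu₁ ≤ -Δzβ₁ + α₁ ∧ Δu₂ ≤ -Δzβ₂ + α₂} have nonempty intersection, while U*((0,1,1,0),z) = {u : Δu₁ ≥ -Δzβ₁ + α₁ ∧ Δu₂ ≤ -Δzβ₂ - α₂} and U*((1,0,0,1),z) = {u : Δu₁ ≤ -Δzβ₁ - α₁ ∧ Δu₂ ≥ -Δzβ₂ + α₂} are disjoint from each other if α₁ > 0 or α₂ > 0. -/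
open scoped BigOperators

theorem ses_Ustar_overlap_and_disjoint {k : ℕ} (α1 α2 : ℝ)
    (hα1 : 0 ≤ α1) (hα2 : 0 ≤ α2) (β1 β2 Δz : Fin k → ℝ) :
    (({u : Fin 2 → Fin 2 → ℝ |
        u 0 1 - u 0 0 ≥ -dot Δz β1 - α1 ∧ u 1 1 - u 1 0 ≥ -dot Δz β2 - α2} ∩
      {u : Fin 2 → Fin 2 → ℝ |
        u 0 1 - u 0 0 ≤ -dot Δz β1 + α1 ∧ u 1 1 - u 1 0 ≤ -dot Δz β2 + α2}).Nonempty) ∧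
    ((0 < α1 ∨ 0 < α2) →
      Disjoint
        {u : Fin 2 → Fin 2 → ℝ |
          u 0 1 - u 0 0 ≥ -dot Δz β1 + α1 ∧ u 1 1 - u 1 0 ≤ -dot Δz β2 - α2}
        {u : Fin 2 → Fin 2 → ℝ |
          u 0 1 - u 0 0 ≤ -dot Δz β1 - α1 ∧ u 1 1 - u 1 0 ≥ -dot Δz β2 + α2}) := by
  constructor
  · refine ⟨fun i j => if j = 1 then (if i = 0 then -dot Δz β1 else -dot Δz β2) else 0, ?_, ?_⟩ <;>
      simp <;> constructor <;> linarith
  · intro hpos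
    rw [Set.disjoint_left]
    rintro u ⟨h1, h2⟩ ⟨h3, h4⟩
    rcases hpos with h | h <;> [skip; skip] <;>
      simp only [ge_iff_le] at h1 h2 h3 h4 <;> linarith
end

section
/- In the censored outcome panel model, U*(Y,Z) = {u : ∃ y₁₀ ∈ Y₁₀, ∃ c ∈ ℝ such that for all t with W_t = 0, Y₁ₜ = αY₂ₜ + Z_tβ + γY₁,ₜ₋₁ + c + u_t, and for all t with W_t = 1, αY₂ₜ + Z_tβ + γY₁,ₜ₋₁ + c + u_t ≤ Y₁ₜ} equals {u : ∃ y₁₀ ∈ Y₁₀ such that for all s,t uncensored, u_t - u_s = Δ_{ts}Y₁ - αΔ_{ts}Y₂ - Δ_{ts}Zβ - γΔ_{t-1,s-1}Y₁, and for all s censored and t uncensored, u_t - u_s ≥ Δ_{ts}Y₁ - αΔ_{ts}Y₂ - Δ_{ts}Zβ - γΔ_{t-1,s-1}Y₁}, provided the uncensored set is nonempty. -/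
open scoped BigOperators

/-- Lagged outcome `Y₁,ₜ₋₁` with initial condition `y10` at `t = 0`. -/
def lagC (Y1 : ℕ → ℝ) (y10 : ℝ) (t : ℕ) : ℝ :=
  if t = 0 then y10 else Y1 (t - 1)

theorem censored_panel_Ustar {T k : ℕ} (α γ : ℝ) (β : Fin k → ℝ)
    (Y1 Y2 : ℕ → ℝ) (Z : ℕ → Fin k → ℝ) (W : ℕ → Bool) (Y10set : Set ℝ)
    (huncensored : ∃ t, t < T ∧ W t = false) :
    {u : ℕ → ℝ | ∃ y10 ∈ Y10set, ∃ c : ℝ, ∀ t, t < T →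
        (W t = false →
          Y1 t = α * Y2 t + dot (Z t) β + γ * lagC Y1 y10 t + c + u t) ∧
        (W t = true →
          α * Y2 t + dot (Z t) β + γ * lagC Y1 y10 t + c + u t ≤ Y1 t)} =
    {u : ℕ → ℝ | ∃ y10 ∈ Y10set,
        (∀ s t, s < T → t < T → W s = false → W t = false →
          u t - u s = (Y1 t - Y1 s) - α * (Y2 t - Y2 s)
            - (dot (Z t) β - dot (Z s) β) - γ * (lagC Y1 y10 t - lagC Y1 y10 s)) ∧
        (∀ s t, s < T → t < T → W s = true → W t = false →
          u t - u s ≥ (Y1 t - Y1 s) - α * (Y2 t - Y2 s)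
            - (dot (Z t) β - dot (Z s) β) - γ * (lagC Y1 y10 t - lagC Y1 y10 s))} := by
  obtain ⟨t0, ht0T, ht0W⟩ := huncensored
  ext u
  simp only [Set.mem_setOf_eq]
  constructor
  · rintro ⟨y10, hy10, c, h⟩
    refine ⟨y10, hy10, ?_, ?_⟩
    · intro s t hs ht hws hwt
      have hs' := (h s hs).1 hws
      have ht' := (h t ht).1 hwt
      rw [hs', ht']; ring
    · intro s t hs ht hws hwt
      have hs' := (h s hs).2 hws
      have ht' := (h t ht).1 hwt
      rw [ht']
      nlinarith [hs']
  · rintro ⟨y10, hy10, heq, hle⟩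
    refine ⟨y10, hy10,
      Y1 t0 - (α * Y2 t0 + dot (Z t0) β + γ * lagC Y1 y10 t0 + u t0), ?_⟩
    intro t ht
    constructor
    · intro hwt
      have := heq t0 t ht0T ht ht0W hwt
      nlinarith [this]
    · intro hwt
      have := hle t t0 ht ht0T hwt ht0W
      nlinarith [this]
end

section
/- In the two-period static binary response panel model (γ = 0) with U independent of Z, a pair (β, G_U) is in the identified set if and only if for almost every z: P[Y=(0,1)|Z=z] ≤ G_U({u : Δu ≥ -Δzβ}) and P[Y=(1,0)|Z=z] ≤ G_U({u : Δu ≤ -Δzβ}); in particular the inequalities arising from the unions of the two nontrivial U* sets are redundant because those unions equal ℝ² or are probabilities of disjoint containment events summing appropriately. -/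
open scoped BigOperators
open MeasureTheory

/-- `U*` set in the static two-period binary response panel (γ = 0):
values of `u` for which some fixed effect `v ∈ ℝ` rationalizes the outcome
`y = (y₁, y₂) ∈ {0,1}²` given covariates `z = (z₁, z₂)`. -/
def UstarSBP2 {k : ℕ} (β : Fin k → ℝ) (z : Fin 2 → Fin k → ℝ)
    (y : Fin 2 → Bool) : Set (Fin 2 → ℝ) :=
  {u | ∃ v : ℝ, ∀ t : Fin 2,
    (y t = true → 0 ≤ dot (z t) β + v + u t) ∧
    (y t = false → dot (z t) β + v + u t ≤ 0)}

/-!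
`U*(0,0) = U*(1,1) = ℝ²`, while `U*(0,1)` and `U*(1,0)` are the two closed half-planes
bounded by the line `Δu = -Δzβ`. Taking `S` to be either half-plane gives the two inequalities.
Conversely, for `S = ℝ²` the containment inequality is trivial; otherwise `S` contains at most one
of the half-planes, since they cover `ℝ²`, so the event `U*(Y) ⊆ S` is empty or a single outcome
whose half-plane lies in `S`.
-/

open Set

section UstarSBP2

variable {k : ℕ} (β : Fin k → ℝ) (z : Fin 2 → Fin k → ℝ)

theorem UstarSBP2_const (b : Bool) : UstarSBP2 β z ![b, b] = univ := by
  refine eq_univ_of_forall fun u => ?_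
  set a₀ := dot (z 0) β + u 0
  set a₁ := dot (z 1) β + u 1
  cases b
  · refine ⟨min (-a₀) (-a₁), Fin.forall_fin_two.2 ⟨?_, ?_⟩⟩ <;>
      simp only [Matrix.cons_val_zero, Matrix.cons_val_one, Bool.false_eq_true,
        IsEmpty.forall_iff, forall_const, true_and]
    · linarith [min_le_left (-a₀) (-a₁)]
    · linarith [min_le_right (-a₀) (-a₁)]
  · refine ⟨max (-a₀) (-a₁), Fin.forall_fin_two.2 ⟨?_, ?_⟩⟩ <;>
      simp only [Matrix.cons_val_zero, Matrix.cons_val_one, Bool.true_eq_false,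
        IsEmpty.forall_iff, forall_const, and_true]
    · linarith [le_max_left (-a₀) (-a₁)]
    · linarith [le_max_right (-a₀) (-a₁)]

theorem UstarSBP2_false_true :
    UstarSBP2 β z ![false, true] = {u | u 1 - u 0 ≥ -(dot (z 1) β - dot (z 0) β)} := by
  ext u
  simp only [UstarSBP2, mem_ofPred_eq, Fin.forall_fin_two, Matrix.cons_val_zero,
    Matrix.cons_val_one, Bool.false_eq_true, Bool.true_eq_false, IsEmpty.forall_iff,
    forall_const, true_and, and_true]
  constructor
  · rintro ⟨v, h₀, h₁⟩
    linarith
  · intro h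
    exact ⟨-(dot (z 0) β + u 0), by linarith, by linarith⟩

theorem UstarSBP2_true_false :
    UstarSBP2 β z ![true, false] = {u | u 1 - u 0 ≤ -(dot (z 1) β - dot (z 0) β)} := by
  ext u
  simp only [UstarSBP2, mem_ofPred_eq, Fin.forall_fin_two, Matrix.cons_val_zero,
    Matrix.cons_val_one, Bool.false_eq_true, Bool.true_eq_false, IsEmpty.forall_iff,
    forall_const, true_and, and_true]
  constructor
  · rintro ⟨v, h₀, h₁⟩
    linarith
  · intro h
    exact ⟨-(dot (z 1) β + u 1), by linarith, by linarith⟩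

theorem UstarSBP2_subset_iff {S : Set (Fin 2 → ℝ)} (hS : S ≠ univ) (y : Fin 2 → Bool) :
    UstarSBP2 β z y ⊆ S ↔
      y = ![false, true] ∧ {u | u 1 - u 0 ≥ -(dot (z 1) β - dot (z 0) β)} ⊆ S ∨
      y = ![true, false] ∧ {u | u 1 - u 0 ≤ -(dot (z 1) β - dot (z 0) β)} ⊆ S := by
  obtain ⟨a, b, rfl⟩ : ∃ a b, y = ![a, b] := ⟨y 0, y 1, by ext i; fin_cases i <;> rfl⟩
  cases a <;> cases b <;>
    simp [UstarSBP2_const, UstarSBP2_false_true, UstarSBP2_true_false, univ_subset_iff, hS]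

end UstarSBP2

theorem measure_setOf_eq_and_le {α β : Type*} [MeasurableSpace α] [MeasurableSpace β]
    {μ : Measure α} {ν : Measure β} {a : α} {P : Prop} {S : Set β} (h : P → μ {a} ≤ ν S) :
    μ {x | x = a ∧ P} ≤ ν S := by
  by_cases hP : P
  · simpa [hP] using h hP
  · simp [hP]

theorem measure_setOf_UstarSBP2_subset_le {k : ℕ} (β : Fin k → ℝ) (z : Fin 2 → Fin k → ℝ)
    (μ : Measure (Fin 2 → Bool)) [IsProbabilityMeasure μ]
    (ν : Measure (Fin 2 → ℝ)) [IsProbabilityMeasure ν]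
    (h₁ : μ {![false, true]} ≤ ν {u | u 1 - u 0 ≥ -(dot (z 1) β - dot (z 0) β)})
    (h₂ : μ {![true, false]} ≤ ν {u | u 1 - u 0 ≤ -(dot (z 1) β - dot (z 0) β)})
    (S : Set (Fin 2 → ℝ)) :
    μ {y | UstarSBP2 β z y ⊆ S} ≤ ν S := by
  by_cases hS : S = univ
  · rw [hS, measure_univ]
    exact prob_le_one
  simp_rw [UstarSBP2_subset_iff β z hS]
  set Hp := {u : Fin 2 → ℝ | u 1 - u 0 ≥ -(dot (z 1) β - dot (z 0) β)}
  set Hm := {u : Fin 2 → ℝ | u 1 - u 0 ≤ -(dot (z 1) β - dot (z 0) β)}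
  have hcover : Hp ∪ Hm = univ :=
    eq_univ_of_forall fun u => le_total (-(dot (z 1) β - dot (z 0) β)) (u 1 - u 0)
  have hnot_both : ¬ Hp ⊆ S ∨ ¬ Hm ⊆ S := by
    contrapose! hS
    exact univ_subset_iff.1 (hcover ▸ union_subset hS.1 hS.2)
  rcases hnot_both with h | h
  · simp only [h, and_false, false_or]
    exact measure_setOf_eq_and_le fun hHm => h₂.trans (measure_mono hHm)
  · simp only [h, and_false, or_false]
    exact measure_setOf_eq_and_le fun hHp => h₁.trans (measure_mono hHp)

theorem static_binary_two_period_identified_set {k : ℕ} {ζ : Type*}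
    (β : Fin k → ℝ) (RZ : Set ζ) (z : ζ → Fin 2 → Fin k → ℝ)
    (FY : ζ → Measure (Fin 2 → Bool)) (hFY : ∀ zv, IsProbabilityMeasure (FY zv))
    (GU : Measure (Fin 2 → ℝ)) [IsProbabilityMeasure GU] :
    (∀ zv ∈ RZ, ∀ S : Set (Fin 2 → ℝ), IsClosed S →
        FY zv {y | UstarSBP2 β (z zv) y ⊆ S} ≤ GU S) ↔
    (∀ zv ∈ RZ,
        FY zv {![false, true]} ≤
          GU {u | u 1 - u 0 ≥ -(dot (z zv 1) β - dot (z zv 0) β)} ∧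
        FY zv {![true, false]} ≤
          GU {u | u 1 - u 0 ≤ -(dot (z zv 1) β - dot (z zv 0) β)}) := by
  constructor
  · intro h zv hzv
    constructor
    · refine (measure_mono ?_).trans (h zv hzv _ (isClosed_le (by fun_prop) (by fun_prop)))
      simp [UstarSBP2_false_true]
    · refine (measure_mono ?_).trans (h zv hzv _ (isClosed_le (by fun_prop) (by fun_prop)))
      simp [UstarSBP2_true_false]
  · intro h zv hzv S _
    have := hFY zv
    exact measure_setOf_UstarSBP2_subset_le β (z zv) (FY zv) GU (h zv hzv).1 (h zv hzv).2 S
end
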